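/- arXiv:1205.5231 — 2 statements merged into one kernel-verified Lean document; each statement's English description precedes it below -/
import Mathlib

section
/- Let ρ be a subnormalized density operator on a finite-dimensional Hilbert space and Π an operator with 0 ≤ Π ≤ I. Then P(ΠρΠ, ρ) ≤ (1/√(tr ρ)) · √((tr ρ)² - (tr[Π² ρ])²). -/
open Matrix Kronecker ComplexOrder

noncomputable section


open scoped Classical
namespace QIT

/-- Square root of a positive semidefinite matrix (junk value `0` otherwise). -/
noncomputable def msqrt {n : Type*} [Fintype n] [DecidableEq n] (A : Matrix n n ℂ) :
    Matrix n n ℂ :=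
  if h : A.PosSemidef then
    (h.1.eigenvectorUnitary : Matrix n n ℂ) *
      Matrix.diagonal ((↑) ∘ (fun x : ℝ => Real.sqrt x) ∘ h.1.eigenvalues) *
      (star h.1.eigenvectorUnitary : Matrix n n ℂ)
  else 0

/-- Trace norm `‖A‖₁ = tr √(Aᴴ A)`. -/
noncomputable def traceNorm {n : Type*} [Fintype n] [DecidableEq n] (A : Matrix n n ℂ) : ℝ :=
  ((msqrt (Aᴴ * A)).trace).re

/-- Fidelity `F(ρ,σ) = ‖√ρ √σ‖₁`. -/
noncomputable def fidelity {n : Type*} [Fintype n] [DecidableEq n] (ρ σ : Matrix n n ℂ) : ℝ :=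
  traceNorm (msqrt ρ * msqrt σ)

/-- Generalized fidelity. -/
noncomputable def gFid {n : Type*} [Fintype n] [DecidableEq n] (ρ σ : Matrix n n ℂ) : ℝ :=
  fidelity ρ σ + Real.sqrt ((1 - ρ.trace.re) * (1 - σ.trace.re))

/-- Purified distance. -/
noncomputable def pDist {n : Type*} [Fintype n] [DecidableEq n] (ρ σ : Matrix n n ℂ) : ℝ :=
  Real.sqrt (1 - (gFid ρ σ) ^ 2)

/-- Subnormalized density operator. -/
def SubNormalized {n : Type*} [Fintype n] (ρ : Matrix n n ℂ) : Prop :=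
  ρ.PosSemidef ∧ ρ.trace.re ≤ 1

/-- Loewner order `A ≤ B`. -/
def mLE {n : Type*} [Fintype n] (A B : Matrix n n ℂ) : Prop := (B - A).PosSemidef

/-- Functional calculus for Hermitian matrices (junk value `0` otherwise). -/
noncomputable def cfcHerm {n : Type*} [Fintype n] [DecidableEq n] (A : Matrix n n ℂ)
    (f : ℝ → ℝ) : Matrix n n ℂ :=
  if hA : A.IsHermitian then
    (hA.eigenvectorUnitary : Matrix n n ℂ) *
      Matrix.diagonal (fun i => (f (hA.eigenvalues i) : ℂ)) *
      (star ((hA.eigenvectorUnitary : Matrix n n ℂ)))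
  else 0

/-- Projector onto the strictly negative eigenspaces of a Hermitian matrix. -/
noncomputable def negProj {n : Type*} [Fintype n] [DecidableEq n] (A : Matrix n n ℂ) :
    Matrix n n ℂ :=
  cfcHerm A (fun x => if x < 0 then 1 else 0)

/-- Projector onto the nonnegative eigenspaces of a Hermitian matrix. -/
noncomputable def posProj {n : Type*} [Fintype n] [DecidableEq n] (A : Matrix n n ℂ) :
    Matrix n n ℂ :=
  cfcHerm A (fun x => if 0 ≤ x then 1 else 0)

/-- Partial trace over the second (right) factor. -/
noncomputable def ptraceRight {a b : Type*} [Fintype a] [Fintype b]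
    (M : Matrix (a × b) (a × b) ℂ) : Matrix a a ℂ :=
  Matrix.of fun i j => ∑ k, M (i, k) (j, k)

/-- Partial trace over the first (left) factor. -/
noncomputable def ptraceLeft {a b : Type*} [Fintype a] [Fintype b]
    (M : Matrix (a × b) (a × b) ℂ) : Matrix b b ℂ :=
  Matrix.of fun i j => ∑ k, M (k, i) (k, j)

/-- Conditional min-entropy `H_min(A|B)_ρ`, conditioning on the second factor. -/
noncomputable def Hmin {a b : Type*} [Fintype a] [Fintype b] [DecidableEq a] [DecidableEq b]
    (ρ : Matrix (a × b) (a × b) ℂ) : ℝ :=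
  sSup {l : ℝ | ∃ σ : Matrix b b ℂ, SubNormalized σ ∧
    mLE ρ ((((2 : ℝ) ^ (-l) : ℝ)) • ((1 : Matrix a a ℂ) ⊗ₖ σ))}

/-- Relative conditional max-entropy `H_max(A|B)_{ρ|σ}`. -/
noncomputable def HmaxRel {a b : Type*} [Fintype a] [Fintype b] [DecidableEq a] [DecidableEq b]
    (ρ : Matrix (a × b) (a × b) ℂ) (σ : Matrix b b ℂ) : ℝ :=
  Real.logb 2 ((fidelity ρ ((1 : Matrix a a ℂ) ⊗ₖ σ)) ^ 2)

/-- Conditional max-entropy `H_max(A|B)_ρ`. -/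
noncomputable def Hmax {a b : Type*} [Fintype a] [Fintype b] [DecidableEq a] [DecidableEq b]
    (ρ : Matrix (a × b) (a × b) ℂ) : ℝ :=
  sSup {x : ℝ | ∃ σ : Matrix b b ℂ, SubNormalized σ ∧ x = HmaxRel ρ σ}

/-- Smooth conditional min-entropy. -/
noncomputable def sHmin {a b : Type*} [Fintype a] [Fintype b] [DecidableEq a] [DecidableEq b]
    (ε : ℝ) (ρ : Matrix (a × b) (a × b) ℂ) : ℝ :=
  sSup {x : ℝ | ∃ ρ' : Matrix (a × b) (a × b) ℂ,
    SubNormalized ρ' ∧ pDist ρ' ρ ≤ ε ∧ x = Hmin ρ'}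

/-- Smooth conditional max-entropy. -/
noncomputable def sHmax {a b : Type*} [Fintype a] [Fintype b] [DecidableEq a] [DecidableEq b]
    (ε : ℝ) (ρ : Matrix (a × b) (a × b) ℂ) : ℝ :=
  sInf {x : ℝ | ∃ ρ' : Matrix (a × b) (a × b) ℂ,
    SubNormalized ρ' ∧ pDist ρ' ρ ≤ ε ∧ x = Hmax ρ'}

/-- Operator norm of a Hermitian (in particular PSD) matrix: largest eigenvalue. -/
noncomputable def opNormPSD {n : Type*} [Fintype n] [DecidableEq n] (A : Matrix n n ℂ) : ℝ :=
  if hA : A.IsHermitian then ⨆ i, hA.eigenvalues i else 0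

end QIT

/-!
With `S = √ρ`, the operator `X = √(ΠρΠ) S` satisfies `Xᴴ X = (SΠS)²`, so
`F(ΠρΠ, ρ) = tr (SΠS) = tr (ρΠ)`. Since `0 ≤ Π ≤ 1` forces `Π² ≤ Π ≤ 1`, the number
`s = tr (Π²ρ)` satisfies `0 ≤ s ≤ tr (ρΠ)` and `s ≤ t = tr ρ`; hence
`F̄(ΠρΠ, ρ) ≥ s + √((1 - s)(1 - t))`, and the bound becomes an inequality between real numbers.
-/

open scoped MatrixOrder

section
variable {A : Type*} [PartialOrder A] [Ring A] [TopologicalSpace A] [StarRing A] [Algebra ℝ A]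
  [StarOrderedRing A] [NonUnitalContinuousFunctionalCalculus ℝ A IsSelfAdjoint]
  [NonnegSpectrumClass ℝ A] [IsSemitopologicalRing A] [T2Space A]

lemma mul_self_le_self_of_nonneg_of_le_one {a : A} (h0 : 0 ≤ a) (h1 : a ≤ 1) : a * a ≤ a := by
  set s := CFC.sqrt a
  have hss : s * s = a := CFC.sqrt_mul_sqrt_self a h0
  have hconj : s * a * s = a * a := by rw [← hss]; simp only [mul_assoc]
  calc a * a = s * a * s := hconj.symm
    _ ≤ s * 1 * s := conjugate_le_conjugate_of_nonneg h1 (CFC.sqrt_nonneg a)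
    _ = a := by rw [mul_one, hss]
end

lemma Matrix.trace_mul_le_trace_mul {n 𝕜 : Type*} [Fintype n] [RCLike 𝕜]
    {A B ρ : Matrix n n 𝕜} (hρ : 0 ≤ ρ) (hAB : A ≤ B) : (A * ρ).trace ≤ (B * ρ).trace := by
  have trace_mul_eq : ∀ C : Matrix n n 𝕜, (C * ρ).trace = (CFC.sqrt ρ * C * CFC.sqrt ρ).trace :=
    fun C => by rw [trace_mul_cycle, CFC.sqrt_mul_sqrt_self ρ hρ, trace_mul_comm]
  rw [trace_mul_eq, trace_mul_eq]
  exact (tracePositiveLinearMap n 𝕜 𝕜).mono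
    (conjugate_le_conjugate_of_nonneg hAB (CFC.sqrt_nonneg ρ))

namespace QIT

variable {n : Type*} [Fintype n] [DecidableEq n]

lemma msqrt_eq_cfcSqrt {A : Matrix n n ℂ} (hA : A.PosSemidef) : msqrt A = CFC.sqrt A := by
  rw [msqrt, dif_pos hA, CFC.sqrt_eq_real_sqrt A hA.nonneg, cfcₙ_eq_cfc (hf0 := Real.sqrt_zero),
    hA.1.cfc_eq, IsHermitian.cfc, Unitary.conjStarAlgAut_apply]
  rfl

lemma traceNorm_eq_re_trace_of_conjTranspose_mul_self {X B : Matrix n n ℂ} (hB : 0 ≤ B)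
    (hXB : Xᴴ * X = B * B) : traceNorm X = B.trace.re := by
  rw [traceNorm, hXB, msqrt_eq_cfcSqrt (IsSelfAdjoint.of_nonneg hB).mul_self_nonneg.posSemidef,
    CFC.sqrt_mul_self B hB]

lemma fidelity_mul_mul_self {ρ P : Matrix n n ℂ} (hρ : 0 ≤ ρ) (hP : 0 ≤ P) :
    fidelity (P * ρ * P) ρ = (ρ * P).trace.re := by
  set S := CFC.sqrt ρ
  have hS : 0 ≤ S := CFC.sqrt_nonneg ρ
  have hPρP : 0 ≤ P * ρ * P := conjugate_nonneg_of_nonneg hρ hP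
  set T := CFC.sqrt (P * ρ * P)
  have hXB : (T * S)ᴴ * (T * S) = (S * P * S) * (S * P * S) := by
    rw [conjTranspose_mul, ← star_eq_conjTranspose, ← star_eq_conjTranspose, hS.star_eq,
      (CFC.sqrt_nonneg _).star_eq]
    calc S * T * (T * S) = S * (T * T) * S := by simp only [mul_assoc]
      _ = S * (P * (S * S) * P) * S := by
        rw [CFC.sqrt_mul_sqrt_self _ hPρP, CFC.sqrt_mul_sqrt_self ρ hρ]
      _ = S * P * S * (S * P * S) := by simp only [mul_assoc]
  rw [fidelity, msqrt_eq_cfcSqrt hρ.posSemidef, msqrt_eq_cfcSqrt hPρP.posSemidef,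
    traceNorm_eq_re_trace_of_conjTranspose_mul_self (conjugate_nonneg_of_nonneg hP hS) hXB,
    trace_mul_cycle, CFC.sqrt_mul_sqrt_self ρ hρ]

end QIT

lemma sqrt_one_sub_sq_add_sqrt_le {s t f : ℝ} (hs0 : 0 ≤ s) (hsf : s ≤ f) (hst : s ≤ t)
    (ht0 : 0 < t) (ht1 : t ≤ 1) :
    Real.sqrt (1 - (f + Real.sqrt ((1 - s) * (1 - t))) ^ 2) ≤
      1 / Real.sqrt t * Real.sqrt (t ^ 2 - s ^ 2) := by
  set w := Real.sqrt ((1 - s) * (1 - t))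
  have hw0 : 0 ≤ w := Real.sqrt_nonneg _
  have hw_sq : w ^ 2 = (1 - s) * (1 - t) := Real.sq_sqrt (by nlinarith)
  -- the only non-quadratic input: it is where `s ≤ t` enters
  have hw_ge : 1 - t ≤ w := Real.le_sqrt_of_sq_le (by nlinarith)
  have hf : 1 - (f + w) ^ 2 ≤ 1 - (s + w) ^ 2 := by nlinarith
  have hs : 1 - (s + w) ^ 2 ≤ (t ^ 2 - s ^ 2) / t := by
    rw [le_div_iff₀ ht0]
    nlinarith [mul_nonneg (mul_nonneg hs0 (sub_nonneg.2 hst)) (sub_nonneg.2 ht1),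
      mul_nonneg (mul_nonneg hs0 ht0.le) (sub_nonneg.2 hw_ge)]
  calc Real.sqrt (1 - (f + w) ^ 2) ≤ Real.sqrt ((t ^ 2 - s ^ 2) / t) :=
        Real.sqrt_le_sqrt (hf.trans hs)
    _ = 1 / Real.sqrt t * Real.sqrt (t ^ 2 - s ^ 2) := by
        rw [Real.sqrt_div' _ ht0.le]; ring

open QIT in
/-- `P(ΠρΠ, ρ) ≤ (1/√trρ)·√((trρ)² - (tr[Π²ρ])²)` for `0 ≤ Π ≤ 1`. -/
theorem stmt4 {n : Type*} [Fintype n] [DecidableEq n] (ρ P : Matrix n n ℂ)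
    (hρpsd : ρ.PosSemidef) (htr0 : 0 < ρ.trace.re) (htr1 : ρ.trace.re ≤ 1)
    (hP0 : P.PosSemidef) (hP1 : (1 - P).PosSemidef) :
    pDist (P * ρ * P) ρ ≤
      (1 / Real.sqrt ρ.trace.re) *
        Real.sqrt ((ρ.trace.re) ^ 2 - (((P * P * ρ).trace).re) ^ 2) := by
  have hPP : P * P ≤ P := mul_self_le_self_of_nonneg_of_le_one hP0.nonneg (Matrix.le_iff.mpr hP1)
  have hs0 : 0 ≤ (P * P * ρ).trace.re := by
    simpa using Complex.re_le_re
      (trace_mul_le_trace_mul hρpsd.nonneg (IsSelfAdjoint.of_nonneg hP0.nonneg).mul_self_nonneg)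
  have hsf : (P * P * ρ).trace.re ≤ (ρ * P).trace.re := by
    rw [trace_mul_comm ρ]
    exact Complex.re_le_re (trace_mul_le_trace_mul hρpsd.nonneg hPP)
  have hst : (P * P * ρ).trace.re ≤ ρ.trace.re := by
    simpa using Complex.re_le_re
      (trace_mul_le_trace_mul hρpsd.nonneg (hPP.trans (Matrix.le_iff.mpr hP1)))
  rw [pDist, gFid, fidelity_mul_mul_self hρpsd.nonneg hP0.nonneg, trace_mul_cycle]
  exact sqrt_one_sub_sq_add_sqrt_le hs0 hsf hst htr0 htr1
end
end

section
/- Counter-example to a min-min chain rule: let d ≥ 2 and define ρ_{ABCC'} = ½(|φ⟩⟨φ|_{AB} ⊗ π_C ⊗ |0⟩⟨0|_{C'} + π_A ⊗ |φ⟩⟨φ|_{BC} ⊗ |1⟩⟨1|_{C'}), where |φ⟩ is a maximally entangled state on two d-dimensional systems and π the maximally mixed state on a d-dimensional system. Then H_min(AB|CC')_ρ = 0 and both H_min(A|BCC')_ρ and H_min(B|CC')_ρ are at most 1 - log d. -/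
/-!
Every bound is obtained by testing `ρ ≤ 2^{-λ} (1 ⊗ σ)` against a vector `∑ᵢ |g i⟩|k i⟩` with
`g` injective: the left side is a sum of entries of `ρ`, the right side is `2^{-λ}` times a sum
of diagonal entries of `σ`, hence at most `2^{-λ} tr σ ≤ 2^{-λ}`. The maximally entangled
vectors inside `ρ` force `2^{-λ} ≥ d/2` for `H_min(A|BCC')` and `H_min(B|CC')`, and (one test
for each value of `C'`) `2^{-λ} ≥ 1` for `H_min(AB|CC')`. Conversely `ρ ≤ (2d)⁻¹ 1`, because
`ρ` is `(2d²)⁻¹` times the sum of the projectors onto `2d` orthogonal vectors of squared norm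
`d`; so `σ = π_{CC'}` attains `λ = 0` for `H_min(AB|CC')`, and the other two entropies are
suprema of nonempty sets.
-/

open Matrix Kronecker ComplexOrder

noncomputable section


open scoped Classical
namespace QIT

/-- The state `ρ_{ABCC'} = ½(|φ⟩⟨φ|_{AB} ⊗ π_C ⊗ |0⟩⟨0| + π_A ⊗ |φ⟩⟨φ|_{BC} ⊗ |1⟩⟨1|)`,
indexed by `A × (B × (C × C'))`. -/
noncomputable def ρex (d : ℕ) :
    Matrix (Fin d × Fin d × Fin d × Fin 2) (Fin d × Fin d × Fin d × Fin 2) ℂ :=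
  Matrix.of fun x y =>
    (1 / 2 : ℂ) *
      ((if x.2.2.2 = 0 ∧ y.2.2.2 = 0 then
          ((1 : ℂ) / d) * (if x.1 = x.2.1 then 1 else 0) * (if y.1 = y.2.1 then 1 else 0) *
            (((1 : ℂ) / d) * (if x.2.2.1 = y.2.2.1 then 1 else 0))
        else 0) +
       (if x.2.2.2 = 1 ∧ y.2.2.2 = 1 then
          ((1 : ℂ) / d) * (if x.1 = y.1 then 1 else 0) *
            (((1 : ℂ) / d) * (if x.2.1 = x.2.2.1 then 1 else 0) *
              (if y.2.1 = y.2.2.1 then 1 else 0))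
        else 0))

section Loewner

variable {n : Type*} [Fintype n] {A B : Matrix n n ℂ}

lemma mLE.smul (h : mLE A B) {r : ℝ} (hr : 0 ≤ r) : mLE (r • A) (r • B) := by
  unfold mLE
  rw [← smul_sub]
  exact Matrix.PosSemidef.smul h hr

lemma mLE.submatrix {m : Type*} [Fintype m] (h : mLE A B) (e : m → n) :
    mLE (A.submatrix e e) (B.submatrix e e) :=
  Matrix.PosSemidef.submatrix h e

lemma mLE.re_sum_le {ι : Type*} [Fintype ι] (h : mLE A B) (f : ι → n) :
    (∑ i, ∑ j, A (f i) (f j)).re ≤ (∑ i, ∑ j, B (f i) (f j)).re := by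
  have := (h.submatrix f).re_dotProduct_nonneg fun _ => 1
  simpa [dotProduct, mulVec, Finset.sum_sub_distrib] using this

lemma mLE_mul_conjTranspose_of_conjTranspose_mul_eq {k : Type*} [Fintype k] [DecidableEq n]
    [DecidableEq k] {V : Matrix n k ℂ} {c : ℝ} (hc : 0 < c) (hV : Vᴴ * V = c • 1) :
    mLE (V * Vᴴ) (c • 1) := by
  set P := c • (1 : Matrix n n ℂ) - V * Vᴴ with hP
  have hPherm : Pᴴ = P := by
    simp [hP, conjTranspose_sub, conjTranspose_smul, conjTranspose_mul]
  have hVV : V * Vᴴ * (V * Vᴴ) = c • (V * Vᴴ) := by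
    rw [Matrix.mul_assoc, ← Matrix.mul_assoc Vᴴ, hV, Matrix.smul_mul, Matrix.one_mul,
      Matrix.mul_smul]
  have hPsq : Pᴴ * P = c • P := by
    rw [hPherm, hP, sub_mul, mul_sub, mul_sub, hVV]
    simp only [Matrix.smul_mul, Matrix.mul_smul, Matrix.one_mul, Matrix.mul_one]
    module
  have hPeq : P = c⁻¹ • (Pᴴ * P) := by
    rw [hPsq, smul_smul, inv_mul_cancel₀ hc.ne', one_smul]
  show P.PosSemidef
  rw [hPeq]
  exact (posSemidef_conjTranspose_mul_self P).smul (inv_nonneg.2 hc.le)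

lemma _root_.Matrix.PosSemidef.sum_re_apply_le_re_trace {ι : Type*} [Fintype ι]
    (hA : A.PosSemidef) {k : ι → n} (hk : Function.Injective k) :
    ∑ i, (A (k i) (k i)).re ≤ A.trace.re :=
  calc ∑ i, (A (k i) (k i)).re = ∑ x ∈ Finset.univ.map ⟨k, hk⟩, (A x x).re :=
        (Finset.sum_map Finset.univ ⟨k, hk⟩ fun x => (A x x).re).symm
    _ ≤ ∑ x, (A x x).re :=
        Finset.sum_le_univ_sum_of_nonneg fun x => (Complex.nonneg_iff.1 hA.diag_nonneg).1
    _ = A.trace.re := by simp [trace]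

end Loewner

section PartialTrace

variable {a b : Type*} [Fintype a] [Fintype b]

lemma ptraceLeft_eq_sum_submatrix (M : Matrix (a × b) (a × b) ℂ) :
    ptraceLeft M = ∑ k, M.submatrix (Prod.mk k) (Prod.mk k) := by
  ext i j
  simp [ptraceLeft, Matrix.sum_apply]

lemma ptraceLeft_sub (M N : Matrix (a × b) (a × b) ℂ) :
    ptraceLeft (M - N) = ptraceLeft M - ptraceLeft N := by
  ext i j
  simp [ptraceLeft, Finset.sum_sub_distrib]

lemma ptraceLeft_smul_one [DecidableEq a] [DecidableEq b] (c : ℝ) :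
    ptraceLeft (c • (1 : Matrix (a × b) (a × b) ℂ)) = (c * Fintype.card a) • 1 := by
  ext i j
  by_cases hij : i = j <;> simp [ptraceLeft, one_apply, hij, mul_comm]

lemma _root_.Matrix.PosSemidef.ptraceLeft {M : Matrix (a × b) (a × b) ℂ} (hM : M.PosSemidef) :
    (ptraceLeft M).PosSemidef := by
  rw [ptraceLeft_eq_sum_submatrix]
  exact posSemidef_sum _ fun k _ => hM.submatrix _

lemma mLE.ptraceLeft {M N : Matrix (a × b) (a × b) ℂ} (h : mLE M N) :
    mLE (ptraceLeft M) (ptraceLeft N) := by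
  unfold mLE
  rw [← ptraceLeft_sub]
  exact PosSemidef.ptraceLeft h

end PartialTrace

section MinEntropy

variable {a b ι : Type*} [Fintype a] [Fintype b] [Fintype ι] [DecidableEq a]

def HminFeasible [DecidableEq b] (ρ : Matrix (a × b) (a × b) ℂ) (l : ℝ) : Prop :=
  ∃ σ : Matrix b b ℂ, SubNormalized σ ∧
    mLE ρ ((2 : ℝ) ^ (-l) • ((1 : Matrix a a ℂ) ⊗ₖ σ))

lemma mLE.re_sum_le_of_le_smul_one_kronecker {ρ : Matrix (a × b) (a × b) ℂ}
    {σ : Matrix b b ℂ} {t : ℝ} (h : mLE ρ (t • ((1 : Matrix a a ℂ) ⊗ₖ σ))) {g : ι → a}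
    (hg : Function.Injective g) (k : ι → b) :
    (∑ i, ∑ j, ρ (g i, k i) (g j, k j)).re ≤ t * ∑ i, (σ (k i) (k i)).re := by
  refine (h.re_sum_le fun i => (g i, k i)).trans_eq ?_
  simp [one_apply, hg.eq_iff, Finset.mul_sum]

lemma hminFeasible_of_mLE_smul_one [DecidableEq b] [Nonempty b]
    {ρ : Matrix (a × b) (a × b) ℂ} {c : ℝ} (hc : 0 < c) (h : mLE ρ (c • 1)) :
    HminFeasible ρ (-Real.logb 2 (c * Fintype.card b)) := by
  have hb : (0 : ℝ) < Fintype.card b := by exact_mod_cast Fintype.card_pos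
  refine ⟨((Fintype.card b : ℝ)⁻¹) • 1, ⟨PosSemidef.one.smul (inv_nonneg.2 hb.le), ?_⟩, ?_⟩
  · simp
  · rwa [neg_neg, Real.rpow_logb two_pos (by norm_num) (by positivity), kronecker_smul,
      one_kronecker_one, smul_smul, mul_assoc, mul_inv_cancel₀ hb.ne', mul_one]

section Bound

variable {ρ : Matrix (a × b) (a × b) ℂ} {x : ℝ}

lemma le_neg_logb_of_hminFeasible [DecidableEq b] (hx : 0 < x)
    (hbound : ∀ (t : ℝ) (σ : Matrix b b ℂ), 0 ≤ t → SubNormalized σ →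
      mLE ρ (t • ((1 : Matrix a a ℂ) ⊗ₖ σ)) → x ≤ t)
    {l : ℝ} (hl : HminFeasible ρ l) : l ≤ -Real.logb 2 x := by
  obtain ⟨σ, hσ, hρσ⟩ := hl
  have := (Real.logb_le_iff_le_rpow one_lt_two hx).2
    (hbound _ σ (Real.rpow_nonneg zero_le_two _) hσ hρσ)
  linarith

lemma Hmin_le_neg_logb [DecidableEq b] (hx : 0 < x) {l₀ : ℝ} (hl₀ : HminFeasible ρ l₀)
    (hbound : ∀ (t : ℝ) (σ : Matrix b b ℂ), 0 ≤ t → SubNormalized σ →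
      mLE ρ (t • ((1 : Matrix a a ℂ) ⊗ₖ σ)) → x ≤ t) :
    Hmin ρ ≤ -Real.logb 2 x :=
  csSup_le ⟨l₀, hl₀⟩ fun _ => le_neg_logb_of_hminFeasible hx hbound

lemma Hmin_eq_neg_logb [DecidableEq b] (hx : 0 < x) (hfeas : HminFeasible ρ (-Real.logb 2 x))
    (hbound : ∀ (t : ℝ) (σ : Matrix b b ℂ), 0 ≤ t → SubNormalized σ →
      mLE ρ (t • ((1 : Matrix a a ℂ) ⊗ₖ σ)) → x ≤ t) :
    Hmin ρ = -Real.logb 2 x :=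
  (Hmin_le_neg_logb hx hfeas hbound).antisymm <|
    le_csSup ⟨_, fun _ => le_neg_logb_of_hminFeasible hx hbound⟩ hfeas

end Bound

end MinEntropy

lemma neg_logb_two_div_two {x : ℝ} (hx : 0 < x) : -Real.logb 2 (x / 2) = 1 - Real.logb 2 x := by
  rw [Real.logb_div hx.ne' two_ne_zero, Real.logb_self_eq_one one_lt_two]
  ring

section Example

variable (d : ℕ)

/-- `ρex d = (2d²)⁻¹ F Fᴴ` for this `F`, whose columns are `|φ̃⟩_AB |c⟩_C |0⟩` and
`|a⟩_A |φ̃⟩_BC |1⟩` with `φ̃ = ∑ᵢ |ii⟩` unnormalised. -/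
def ρexFactor : Matrix (Fin d × Fin d × Fin d × Fin 2) (Fin d ⊕ Fin d) ℂ :=
  Matrix.of fun x u => match u with
    | .inl c => if x.1 = x.2.1 ∧ x.2.2.1 = c ∧ x.2.2.2 = 0 then 1 else 0
    | .inr a => if x.1 = a ∧ x.2.1 = x.2.2.1 ∧ x.2.2.2 = 1 then 1 else 0

lemma ρexFactor_conjTranspose_mul : (ρexFactor d)ᴴ * ρexFactor d = (d : ℝ) • 1 := by
  ext u u'
  cases u <;> cases u' <;>
    simp [ρexFactor, mul_apply, conjTranspose_apply, Fintype.sum_prod_type, one_apply, apply_ite,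
      Finset.sum_ite_eq, Finset.sum_ite_eq', ite_and] <;>
    (split <;> simp_all [eq_comm])

lemma ρex_eq_smul_mul_conjTranspose :
    ρex d = (2 * d * d : ℝ)⁻¹ • (ρexFactor d * (ρexFactor d)ᴴ) := by
  have h2 : ∀ g : Fin 2, g = 0 ∨ g = 1 := by decide
  ext ⟨a, b, c, g⟩ ⟨a', b', c', g'⟩
  rcases h2 g with rfl | rfl <;> rcases h2 g' with rfl | rfl <;>
    simp [ρex, ρexFactor, mul_apply, conjTranspose_apply, Fintype.sum_sum_type,
      Finset.sum_ite_eq, ite_and] <;>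
    split_ifs <;> simp_all <;> ring

variable [NeZero d]

lemma mLE_ρex : mLE (ρex d) ((2 * d : ℝ)⁻¹ • 1) := by
  have hd : (0 : ℝ) < d := Nat.cast_pos.2 (NeZero.pos d)
  have hscale : (2 * d * d : ℝ)⁻¹ * d = (2 * d : ℝ)⁻¹ := by field_simp
  have := (mLE_mul_conjTranspose_of_conjTranspose_mul_eq hd (ρexFactor_conjTranspose_mul d)).smul
    (inv_nonneg.2 (by positivity : (0 : ℝ) ≤ 2 * d * d))
  rwa [← ρex_eq_smul_mul_conjTranspose, smul_smul, hscale] at this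

lemma sum_sum_ρex_apply_maxEnt_AB (k : Fin d) :
    ∑ i, ∑ j, ρex d (i, i, k, 0) (j, j, k, 0) = 1 / 2 := by
  have hd : (d : ℂ) ≠ 0 := Nat.cast_ne_zero.2 (NeZero.ne d)
  simp [ρex]
  field_simp

lemma sum_sum_ρex_apply_maxEnt_BC (a : Fin d) :
    ∑ b, ∑ b', ρex d (a, b, b, 1) (a, b', b', 1) = 1 / 2 := by
  have hd : (d : ℂ) ≠ 0 := Nat.cast_ne_zero.2 (NeZero.ne d)
  simp [ρex]
  field_simp

theorem Hmin_ρex_le : Hmin (ρex d) ≤ 1 - Real.logb 2 d := by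
  have hd : (0 : ℝ) < d := Nat.cast_pos.2 (NeZero.pos d)
  rw [← neg_logb_two_div_two hd]
  refine Hmin_le_neg_logb (by positivity)
    (hminFeasible_of_mLE_smul_one (by positivity) (mLE_ρex d)) fun t σ ht ⟨hσ, hσtr⟩ hρσ => ?_
  have htest (k : Fin d) : 1 / 2 ≤ t * ∑ a, (σ (a, k, 0) (a, k, 0)).re := by
    simpa [sum_sum_ρex_apply_maxEnt_AB] using
      hρσ.re_sum_le_of_le_smul_one_kronecker Function.injective_id fun a => (a, k, 0)
  have htr : ∑ k, ∑ a, (σ (a, k, 0) (a, k, 0)).re ≤ 1 := by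
    refine le_trans ?_ hσtr
    rw [← Fintype.sum_prod_type']
    exact hσ.sum_re_apply_le_re_trace (k := fun p : Fin d × Fin d => (p.2, p.1, 0))
      fun p q h => by simpa [Prod.ext_iff, and_comm] using h
  calc d / 2 = ∑ _k : Fin d, (1 / 2 : ℝ) := by simp; ring
    _ ≤ ∑ k, t * ∑ a, (σ (a, k, 0) (a, k, 0)).re := Finset.sum_le_sum fun k _ => htest k
    _ ≤ t := by rw [← Finset.mul_sum]; exact mul_le_of_le_one_right ht htr

theorem Hmin_ptraceLeft_ρex_le : Hmin (ptraceLeft (ρex d)) ≤ 1 - Real.logb 2 d := by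
  have hd : (0 : ℝ) < d := Nat.cast_pos.2 (NeZero.pos d)
  have hle : mLE (ptraceLeft (ρex d)) (((2 * d : ℝ)⁻¹ * d) • 1) := by
    simpa [ptraceLeft_smul_one] using (mLE_ρex d).ptraceLeft
  rw [← neg_logb_two_div_two hd]
  refine Hmin_le_neg_logb (by positivity) (hminFeasible_of_mLE_smul_one (by positivity) hle)
    fun t σ ht ⟨hσ, hσtr⟩ hρσ => ?_
  have hsum : ∑ b, ∑ b', ptraceLeft (ρex d) (b, b, 1) (b', b', 1) = d / 2 := by
    calc _ = ∑ b, ∑ a, ∑ b', ρex d (a, b, b, 1) (a, b', b', 1) :=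
          Finset.sum_congr rfl fun _ _ => Finset.sum_comm
      _ = d / 2 := by rw [Finset.sum_comm]; simp [sum_sum_ρex_apply_maxEnt_BC]; ring
  have htest : d / 2 ≤ t * ∑ b, (σ (b, 1) (b, 1)).re := by
    simpa [hsum] using
      hρσ.re_sum_le_of_le_smul_one_kronecker Function.injective_id fun b => (b, (1 : Fin 2))
  have htr : ∑ b, (σ (b, 1) (b, 1)).re ≤ 1 :=
    (hσ.sum_re_apply_le_re_trace fun b b' h => by simpa using h).trans hσtr
  exact htest.trans (mul_le_of_le_one_right ht htr)

theorem Hmin_ρex_prodAssoc_eq_zero :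
    Hmin ((ρex d).submatrix ⇑(Equiv.prodAssoc (Fin d) (Fin d) (Fin d × Fin 2))
        ⇑(Equiv.prodAssoc (Fin d) (Fin d) (Fin d × Fin 2))) = 0 := by
  set e := Equiv.prodAssoc (Fin d) (Fin d) (Fin d × Fin 2)
  have hd : (0 : ℝ) < d := Nat.cast_pos.2 (NeZero.pos d)
  have hle : mLE ((ρex d).submatrix e e) ((2 * d : ℝ)⁻¹ • 1) := by
    simpa [submatrix_smul, submatrix_one_equiv] using (mLE_ρex d).submatrix e
  have hfeas := hminFeasible_of_mLE_smul_one (by positivity) hle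
  rw [show (2 * d : ℝ)⁻¹ * Fintype.card (Fin d × Fin 2) = 1 by simp; field_simp] at hfeas
  rw [← neg_eq_zero.2 (Real.logb_one (b := 2))]
  refine Hmin_eq_neg_logb one_pos hfeas fun t σ ht ⟨hσ, hσtr⟩ hρσ => ?_
  have htestAB (k : Fin d) : 1 / 2 ≤ t * (d * (σ (k, 0) (k, 0)).re) := by
    simpa [e, sum_sum_ρex_apply_maxEnt_AB] using
      hρσ.re_sum_le_of_le_smul_one_kronecker (g := fun i : Fin d => (i, i))
        (fun i j h => by simpa using h) fun _ => (k, 0)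
  have htestBC : 1 / 2 ≤ t * ∑ b, (σ (b, 1) (b, 1)).re := by
    simpa [e, sum_sum_ρex_apply_maxEnt_BC] using
      hρσ.re_sum_le_of_le_smul_one_kronecker (g := fun b : Fin d => (0, b))
        (fun b b' h => by simpa using h) fun b => (b, 1)
  have htestAB' : 1 / 2 ≤ t * ∑ k, (σ (k, 0) (k, 0)).re := by
    refine le_of_mul_le_mul_left ?_ hd
    calc d * (1 / 2) = ∑ _k : Fin d, (1 / 2 : ℝ) := by simp
      _ ≤ ∑ k, t * (d * (σ (k, 0) (k, 0)).re) := Finset.sum_le_sum fun k _ => htestAB k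
      _ = d * (t * ∑ k, (σ (k, 0) (k, 0)).re) := by
        rw [Finset.mul_sum, Finset.mul_sum]
        exact Finset.sum_congr rfl fun _ _ => by ring
  have htr : σ.trace.re = ∑ k, (σ (k, 0) (k, 0)).re + ∑ b, (σ (b, 1) (b, 1)).re := by
    simp [trace, Fintype.sum_prod_type, Fin.sum_univ_two, Finset.sum_add_distrib]
  calc (1 : ℝ) = 1 / 2 + 1 / 2 := by norm_num
    _ ≤ t * σ.trace.re := by rw [htr, mul_add]; exact add_le_add htestAB' htestBC
    _ ≤ t := mul_le_of_le_one_right ht hσtr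

end Example

/-- Counter-example showing the failure of a min-min chain rule. -/
theorem stmt19 (d : ℕ) (hd : 2 ≤ d) :
    Hmin ((ρex d).submatrix ⇑(Equiv.prodAssoc (Fin d) (Fin d) (Fin d × Fin 2))
        ⇑(Equiv.prodAssoc (Fin d) (Fin d) (Fin d × Fin 2))) = 0 ∧
    Hmin (ρex d) ≤ 1 - Real.logb 2 d ∧
    Hmin (ptraceLeft (ρex d)) ≤ 1 - Real.logb 2 d := by
  have : NeZero d := ⟨by omega⟩
  exact ⟨Hmin_ρex_prodAssoc_eq_zero d, Hmin_ρex_le d, Hmin_ptraceLeft_ρex_le d⟩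

end QIT
end
end
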